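/- arXiv:1108.1721 — 7 statements merged into one kernel-verified Lean document; each statement's English description precedes it below -/
import Mathlib

section
/- If a Hausdorff locally convex space E contains a Schauder basis, or even only a weak Schauder basis, then E possesses the bounded approximation property. -/
/-
Setting: `E` is a Hausdorff locally convex topological vector space over `𝕜 = ℝ` or `ℂ`
(`RCLike 𝕜`), with `E' = E →L[𝕜] 𝕜` its (strong) dual.
-/

open Filter Topology Bornology

section Prelude

variable (𝕜 : Type) [RCLike 𝕜]

/-- A continuous linear operator on `E` is of finite rank if its range is
finite-dimensional. -/
def IsFiniteRank {E : Type} [AddCommGroup E] [Module 𝕜 E] [TopologicalSpace E]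
    (A : E →L[𝕜] E) : Prop :=
  FiniteDimensional 𝕜 (LinearMap.range (A : E →ₗ[𝕜] E))

/-- The ordinary trace `sp` of a (finite-rank) operator: the trace of the endomorphism
that it induces on its image. -/
noncomputable def sp {E : Type} [AddCommGroup E] [Module 𝕜 E] [TopologicalSpace E]
    (A : E →L[𝕜] E) : 𝕜 :=
  LinearMap.trace 𝕜 (LinearMap.range (A : E →ₗ[𝕜] E))
    ((A : E →ₗ[𝕜] E).restrict (fun x _ => LinearMap.mem_range_self _ x))

/-- The bounded approximation property: there is a net of finite-rank operators that
converges to the identity operator in the weak operator topology and is bounded in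
that topology. -/
def HasBAP (E : Type) [AddCommGroup E] [Module 𝕜 E] [TopologicalSpace E] : Prop :=
  ∃ (ι : Type) (lfil : Filter ι) (T : ι → E →L[𝕜] E), lfil.NeBot ∧
    (∀ ν, IsFiniteRank 𝕜 (T ν)) ∧
    (∀ (x : E) (f : E →L[𝕜] 𝕜), Tendsto (fun ν => f (T ν x)) lfil (𝓝 (f x))) ∧
    (∀ (x : E) (f : E →L[𝕜] 𝕜), ∃ C : ℝ, ∀ ν, ‖f (T ν x)‖ ≤ C)

/-- The approximation property: the finite-rank operators are dense in `L(E)` for the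
topology of uniform convergence on precompact (totally bounded) subsets of `E`. -/
def HasAP (E : Type) [AddCommGroup E] [Module 𝕜 E] [UniformSpace E] : Prop :=
  ∀ (A : E →L[𝕜] E) (S : Set E), TotallyBounded S → ∀ U ∈ 𝓝 (0 : E),
    ∃ F : E →L[𝕜] E, IsFiniteRank 𝕜 F ∧ ∀ x ∈ S, A x - F x ∈ U

/-- The weak approximation property: the finite-rank operators are dense in `L(E)` for
the topology of uniform convergence on absolutely convex compact subsets of `E`. -/
def HasWeakAP (E : Type) [AddCommGroup E] [Module 𝕜 E] [Module ℝ E]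
    [TopologicalSpace E] : Prop :=
  ∀ (A : E →L[𝕜] E) (K : Set E), IsCompact K → Balanced 𝕜 K → Convex ℝ K →
    ∀ U ∈ 𝓝 (0 : E), ∃ F : E →L[𝕜] E, IsFiniteRank 𝕜 F ∧ ∀ x ∈ K, A x - F x ∈ U

/-- A linear operator is weakly continuous iff the composition with every continuous
linear functional is again a continuous linear functional. -/
def IsWeaklyContinuous {E : Type} [AddCommGroup E] [Module 𝕜 E] [TopologicalSpace E]
    (A : E →ₗ[𝕜] E) : Prop :=
  ∀ f : E →L[𝕜] 𝕜, Continuous fun v => f (A v)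

/-- `B` is an absolutely convex bounded set such that the normed space `E_B`
(the span of `B` with the gauge of `B` as norm) is complete, i.e. a Banach disk.
(Completeness of the normed space `E_B` is expressed as sequential completeness for
the gauge of `B`, which is equivalent since `E_B` is metrizable.) -/
def IsBanachDisk {V : Type} [AddCommGroup V] [Module 𝕜 V] [Module ℝ V]
    [TopologicalSpace V] (B : Set V) : Prop :=
  Balanced 𝕜 B ∧ Convex ℝ B ∧ IsVonNBounded 𝕜 B ∧
    ∀ u : ℕ → V, (∀ n, u n ∈ Submodule.span 𝕜 B) →
      (∀ ε : ℝ, 0 < ε → ∃ N : ℕ, ∀ m ≥ N, ∀ n ≥ N, gauge B (u m - u n) < ε) →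
      ∃ v ∈ Submodule.span 𝕜 B, ∀ ε : ℝ, 0 < ε → ∃ N : ℕ, ∀ n ≥ N, gauge B (v - u n) < ε

/-- The data of a Fredholm kernel: a summable sequence of scalars, a sequence in a
Banach disk `B ⊆ E` and a sequence in a Banach disk `B' ⊆ E'`. -/
def FredholmKernelSeqs {E : Type} [AddCommGroup E] [Module 𝕜 E] [Module ℝ E]
    [TopologicalSpace E] [IsTopologicalAddGroup E]
    (l : ℕ → 𝕜) (x : ℕ → E) (x' : ℕ → E →L[𝕜] 𝕜) : Prop :=
  (Summable fun i => ‖l i‖) ∧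
  (∃ B : Set E, IsBanachDisk 𝕜 B ∧ ∀ i, x i ∈ B) ∧
  (∃ B' : Set (E →L[𝕜] 𝕜), IsBanachDisk 𝕜 B' ∧ ∀ i, x' i ∈ B')

/-- `A` is represented as the Fredholm operator `v ↦ ∑_{i=1}^∞ λ_i ⟨x'_i, v⟩ x_i`,
where `∑ |λ_i| < ∞`, `{x_i} ⊆ B ⊆ E` and `{x'_i} ⊆ B' ⊆ E'` with `B`, `B'` absolutely
convex bounded sets such that `E_B` and `E'_{B'}` are complete. -/
def FredholmRep {E : Type} [AddCommGroup E] [Module 𝕜 E] [Module ℝ E]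
    [TopologicalSpace E] [IsTopologicalAddGroup E]
    (A : E → E) (l : ℕ → 𝕜) (x : ℕ → E) (x' : ℕ → E →L[𝕜] 𝕜) : Prop :=
  FredholmKernelSeqs 𝕜 l x x' ∧
  ∀ v : E, Tendsto (fun n => ∑ i ∈ Finset.range n, (l i * x' i v) • x i) atTop (𝓝 (A v))

/-- `A` is represented as the nuclear operator `v ↦ ∑_{i=1}^∞ λ_i ⟨x'_i, v⟩ x_i`,
where `∑ |λ_i| < ∞`, `{x_i}` lies in an absolutely convex bounded complete set `B ⊆ E`
and `{x'_i}` is equicontinuous, i.e. lies in the polar of a neighborhood of zero. -/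
def NuclearRep {E : Type} [AddCommGroup E] [Module 𝕜 E] [Module ℝ E]
    [UniformSpace E] [IsUniformAddGroup E]
    (A : E → E) (l : ℕ → 𝕜) (x : ℕ → E) (x' : ℕ → E →L[𝕜] 𝕜) : Prop :=
  (Summable fun i => ‖l i‖) ∧
  (∃ B : Set E, Balanced 𝕜 B ∧ Convex ℝ B ∧ IsVonNBounded 𝕜 B ∧ IsComplete B ∧
    ∀ i, x i ∈ B) ∧
  (∃ U ∈ 𝓝 (0 : E), ∀ i, ∀ v ∈ U, ‖(x' i) v‖ ≤ 1) ∧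
  ∀ v : E, Tendsto (fun n => ∑ i ∈ Finset.range n, (l i * x' i v) • x i) atTop (𝓝 (A v))

end Prelude

section BAPFromSequence

variable {𝕜 : Type} [RCLike 𝕜] {E : Type} [AddCommGroup E] [Module 𝕜 E] [TopologicalSpace E]

theorem isFiniteRank_sum_smulRight [ContinuousAdd E] [ContinuousSMul 𝕜 E] {ι : Type*}
    (s : Finset ι) (φ : ι → E →L[𝕜] 𝕜) (v : ι → E) :
    IsFiniteRank 𝕜 (∑ i ∈ s, (φ i).smulRight (v i)) := by
  have hrange : LinearMap.range ((∑ i ∈ s, (φ i).smulRight (v i) : E →L[𝕜] E) : E →ₗ[𝕜] E)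
      ≤ Submodule.span 𝕜 (v '' s) := by
    rintro _ ⟨x, rfl⟩
    simp only [ContinuousLinearMap.coe_coe, sum_apply, ContinuousLinearMap.smulRight_apply]
    exact Submodule.sum_mem _ fun i hi =>
      Submodule.smul_mem _ _ (Submodule.subset_span ⟨i, hi, rfl⟩)
  have : FiniteDimensional 𝕜 (Submodule.span 𝕜 (v '' s)) :=
    FiniteDimensional.span_of_finite 𝕜 (s.finite_toSet.image v)
  exact Submodule.finiteDimensional_of_le hrange

/-- For a *sequence* of operators, weak operator convergence already implies weak operator
boundedness, since a convergent sequence of scalars is bounded. -/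
theorem hasBAP_of_tendsto_weakOperator (T : ℕ → E →L[𝕜] E) (hT : ∀ n, IsFiniteRank 𝕜 (T n))
    (hlim : ∀ (x : E) (f : E →L[𝕜] 𝕜), Tendsto (fun n => f (T n x)) atTop (𝓝 (f x))) :
    HasBAP 𝕜 E := by
  refine ⟨ℕ, atTop, T, atTop_neBot, hT, hlim, fun x f => ?_⟩
  obtain ⟨C, hC⟩ := (hlim x f).norm.bddAbove_range
  exact ⟨C, fun n => hC (Set.mem_range_self n)⟩

end BAPFromSequence

variable {𝕜 : Type} [RCLike 𝕜] {E : Type} [AddCommGroup E] [Module 𝕜 E]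
  [UniformSpace E] [IsUniformAddGroup E] [ContinuousSMul 𝕜 E]
  [Module ℝ E] [IsScalarTower ℝ 𝕜 E] [LocallyConvexSpace ℝ E] [T2Space E]

theorem statement1_general (e : ℕ → E) (e' : ℕ → E →L[𝕜] 𝕜)
    (hexp : ∀ (x : E) (f : E →L[𝕜] 𝕜),
      Filter.Tendsto (fun n => f (∑ i ∈ Finset.range n, (e' i x) • e i))
        Filter.atTop (𝓝 (f x))) :
    HasBAP 𝕜 E :=
  hasBAP_of_tendsto_weakOperator (fun n => ∑ i ∈ Finset.range n, (e' i).smulRight (e i))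
    (fun n => isFiniteRank_sum_smulRight _ e' e) fun x f => by
      simpa only [sum_apply, ContinuousLinearMap.smulRight_apply] using hexp x f

/-- If a Hausdorff locally convex space `E` contains a Schauder basis, or
even only a weak Schauder basis, then `E` possesses the bounded approximation property.
The (weak) Schauder basis `{e_i}` with biorthogonal coefficient functionals `{e'_i}` is
given by the weak convergence of the expansion `x = ∑_{i=1}^∞ ⟨e'_i, x⟩ e_i` together
with the uniqueness of the coefficients. -/
theorem statement1 (e : ℕ → E) (e' : ℕ → E →L[𝕜] 𝕜)
    (hexp : ∀ (x : E) (f : E →L[𝕜] 𝕜),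
      Filter.Tendsto (fun n => f (∑ i ∈ Finset.range n, (e' i x) • e i))
        Filter.atTop (𝓝 (f x)))
    (huniq : ∀ (x : E) (ξ : ℕ → 𝕜),
      (∀ f : E →L[𝕜] 𝕜, Filter.Tendsto (fun n => f (∑ i ∈ Finset.range n, ξ i • e i))
          Filter.atTop (𝓝 (f x))) →
      ∀ i, ξ i = e' i x) :
    HasBAP 𝕜 E :=
  statement1_general e e' hexp
end

section
/- A Hausdorff locally convex space E possesses the bounded approximation property if and only if there exists a net of finite-rank operators on E that converges to the identity operator in the strong operator topology (the topology of pointwise convergence) and is bounded in that topology. -/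
/-
Setting: `E` is a Hausdorff locally convex topological vector space over `𝕜 = ℝ` or `ℂ`
(`RCLike 𝕜`), with `E' = E →L[𝕜] 𝕜` its (strong) dual.
-/

open Filter Topology Bornology

variable {𝕜 : Type} [RCLike 𝕜] {E : Type} [AddCommGroup E] [Module 𝕜 E]
  [UniformSpace E] [IsUniformAddGroup E] [ContinuousSMul 𝕜 E]
  [Module ℝ E] [IsScalarTower ℝ 𝕜 E] [LocallyConvexSpace ℝ E] [T2Space E]

/-!
Weak and strong operator boundedness agree by Mackey's theorem: for a continuous seminorm `p`,
the points of a weakly bounded set act as a pointwise bounded family of functionals on the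
Banach space dual to `(E, p)`, so Banach–Steinhaus bounds `p` on the set.

Weak convergence is upgraded to strong convergence by passing to convex combinations. On a finite
power `Eⁿ` every continuous functional is a sum of functionals on the factors, so a net of
operators converging weakly to the identity converges weakly in every `Eⁿ` after evaluating at
`n` points; by Mazur's theorem the convex hull of the net therefore contains the identity in its
pointwise closure. The convex hull still consists of finite-rank operators and is still weakly,
hence strongly, pointwise bounded, and the operators in it, filtered by pointwise neighbourhoods
of the identity, form the required net.
-/

open Set

theorem Seminorm.bddAbove_image_of_forall_dominated_bounded {𝕜 F : Type*} [RCLike 𝕜]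
    [AddCommGroup F] [Module 𝕜 F] (p : Seminorm 𝕜 F) {S : Set F}
    (h : ∀ f : F →ₗ[𝕜] 𝕜, (∃ C, ∀ x, ‖f x‖ ≤ C * p x) → ∃ C, ∀ v ∈ S, ‖f v‖ ≤ C) :
    BddAbove (p '' S) := by
  let _ : SeminormedAddCommGroup F := p.toAddGroupSeminorm.toSeminormedAddCommGroup
  let _ : NormedSpace 𝕜 F := ⟨fun a x => (map_smul_eq_mul p a x).le⟩
  obtain ⟨M, hM⟩ := banach_steinhaus (g := fun v : S => NormedSpace.inclusionInDoubleDual 𝕜 F v)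
    fun f => let ⟨C, hC⟩ := h f ⟨‖f‖, f.le_opNorm⟩; ⟨C, fun v => hC v v.2⟩
  refine ⟨M, forall_mem_image.2 fun v hv => ?_⟩
  calc p v = ‖NormedSpace.inclusionInDoubleDualLi 𝕜 v‖ := (LinearIsometry.norm_map _ v).symm
    _ ≤ M := hM ⟨v, hv⟩

theorem PolynormableSpace.isVonNBounded_of_forall_isBounded_image {𝕜 F : Type*} [RCLike 𝕜]
    [AddCommGroup F] [Module 𝕜 F] [TopologicalSpace F] [PolynormableSpace 𝕜 F] {S : Set F}
    (h : ∀ f : StrongDual 𝕜 F, IsBounded (f '' S)) : IsVonNBounded 𝕜 S := by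
  have hp := PolynormableSpace.withSeminorms 𝕜 F
  have := hp.topologicalAddGroup
  refine hp.isVonNBounded_iff_seminorm_bddAbove.2 fun p => ?_
  refine p.1.bddAbove_image_of_forall_dominated_bounded fun f ⟨C, hC⟩ => ?_
  have hf : Continuous f := continuous_of_continuousAt_zero f <| by
    rw [ContinuousAt, map_zero]
    exact squeeze_zero_norm hC (by simpa using (p.2.tendsto 0).const_mul C)
  simpa [isBounded_iff_forall_norm_le] using h ⟨f, hf⟩

theorem LocallyConvexSpace.isVonNBounded_of_forall_isBounded_image {𝕜 F : Type*} [RCLike 𝕜]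
    [AddCommGroup F] [Module 𝕜 F] [TopologicalSpace F] [IsTopologicalAddGroup F]
    [ContinuousSMul 𝕜 F] [Module ℝ F] [IsScalarTower ℝ 𝕜 F] [LocallyConvexSpace ℝ F] {S : Set F}
    (h : ∀ f : StrongDual 𝕜 F, IsBounded (f '' S)) : IsVonNBounded 𝕜 S := by
  have : ContinuousSMul ℝ F := IsScalarTower.continuousSMul 𝕜
  suffices IsVonNBounded ℝ S from this.extend_scalars 𝕜
  refine PolynormableSpace.isVonNBounded_of_forall_isBounded_image fun g => ?_
  obtain ⟨C, hC⟩ := isBounded_iff_forall_norm_le.1 (h (g.extendRCLike (𝕜 := 𝕜)))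
  refine isBounded_iff_forall_norm_le.2 ⟨C, forall_mem_image.2 fun v hv => ?_⟩
  calc ‖g v‖ = ‖RCLike.re (g.extendRCLike v : 𝕜)‖ := by rw [StrongDual.re_extendRCLike_apply]
    _ ≤ ‖(g.extendRCLike v : 𝕜)‖ := RCLike.norm_re_le_norm _
    _ ≤ C := hC _ (mem_image_of_mem _ hv)

theorem tendsto_strongDual_pi {𝕜 F α σ : Type*} [RCLike 𝕜] [AddCommGroup F] [Module 𝕜 F]
    [TopologicalSpace F] [Finite σ] {l : Filter α} {u : α → σ → F} {g : σ → F}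
    (h : ∀ j (f : StrongDual 𝕜 F), Tendsto (fun a => f (u a j)) l (𝓝 (f (g j))))
    (φ : StrongDual 𝕜 (σ → F)) : Tendsto (fun a => φ (u a)) l (𝓝 (φ g)) := by
  classical
  have := Fintype.ofFinite σ
  have hφ (y : σ → F) :
      φ y = ∑ j, φ.comp (ContinuousLinearMap.single 𝕜 (fun _ => F) j) (y j) := by
    conv_lhs => rw [← Finset.univ_sum_single y]
    simp
  simp only [hφ]
  exact tendsto_finsetSum _ fun j _ => h j _

theorem mem_closure_of_forall_strongDual_tendsto {𝕜 F α : Type*} [RCLike 𝕜] [AddCommGroup F]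
    [Module 𝕜 F] [TopologicalSpace F] [IsTopologicalAddGroup F] [ContinuousSMul 𝕜 F]
    [Module ℝ F] [IsScalarTower ℝ 𝕜 F] [LocallyConvexSpace ℝ F] {l : Filter α} [l.NeBot]
    {s : Set F} (hs : Convex ℝ s) {u : α → F} (hu : ∀ᶠ a in l, u a ∈ s) {x : F}
    (h : ∀ f : StrongDual 𝕜 F, Tendsto (fun a => f (u a)) l (𝓝 (f x))) : x ∈ closure s := by
  have hweak : Tendsto (fun a => toWeakSpace 𝕜 F (u a)) l (𝓝 (toWeakSpace 𝕜 F x)) := by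
    have hind : IsInducing fun (y : WeakSpace 𝕜 F) (f : StrongDual 𝕜 F) =>
        (topDualPairing 𝕜 F).flip y f := ⟨rfl⟩
    exact hind.tendsto_nhds_iff.2 (tendsto_pi_nhds.2 h)
  obtain ⟨y, hy, hyx⟩ : toWeakSpace 𝕜 F x ∈ toWeakSpace 𝕜 F '' closure s := by
    rw [hs.toWeakSpace_closure 𝕜]
    exact mem_closure_of_tendsto hweak (hu.mono fun a => mem_image_of_mem _)
  rwa [← (toWeakSpace 𝕜 F).injective hyx]

theorem mem_closure_pi_of_forall_strongDual_tendsto {𝕜 F α X : Type*} [RCLike 𝕜]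
    [AddCommGroup F] [Module 𝕜 F] [TopologicalSpace F] [IsTopologicalAddGroup F]
    [ContinuousSMul 𝕜 F] [Module ℝ F] [IsScalarTower ℝ 𝕜 F] [LocallyConvexSpace ℝ F]
    {l : Filter α} [l.NeBot] {s : Set (X → F)} (hs : Convex ℝ s) {u : α → X → F}
    (hu : ∀ᶠ a in l, u a ∈ s) {g : X → F}
    (h : ∀ x (f : StrongDual 𝕜 F), Tendsto (fun a => f (u a x)) l (𝓝 (f (g x)))) :
    g ∈ closure s := by
  refine mem_closure_iff_nhds.2 fun t ht => ?_
  rw [nhds_pi, Filter.mem_pi] at ht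
  obtain ⟨I, hI, V, hV, hVt⟩ := ht
  have := hI.to_subtype
  let π : (X → F) →ₗ[ℝ] (I → F) := LinearMap.funLeft ℝ F Subtype.val
  have hπg : π g ∈ closure (π '' s) :=
    mem_closure_of_forall_strongDual_tendsto (𝕜 := 𝕜) (hs.linear_image π)
      (hu.mono fun a => mem_image_of_mem π) (tendsto_strongDual_pi fun j => h j)
  obtain ⟨_, hfV, f, hf, rfl⟩ := mem_closure_iff_nhds.1 hπg (univ.pi fun j => V j)
    (set_pi_mem_nhds finite_univ fun j _ => hV j)
  exact ⟨f, hVt fun i hi => hfV ⟨i, hi⟩ trivial, hf⟩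

theorem coeFn_mem_closure_convexHull_of_tendsto_weak {𝕜 F ι : Type*} [RCLike 𝕜]
    [AddCommGroup F] [Module 𝕜 F] [TopologicalSpace F] [IsTopologicalAddGroup F]
    [ContinuousSMul 𝕜 F] [Module ℝ F] [IsScalarTower ℝ 𝕜 F] [LocallyConvexSpace ℝ F]
    [ContinuousConstSMul ℝ F] {l : Filter ι} [l.NeBot] {T : ι → F →L[𝕜] F} {A : F →L[𝕜] F}
    (h : ∀ x (f : StrongDual 𝕜 F), Tendsto (fun ν => f (T ν x)) l (𝓝 (f (A x)))) :
    ⇑A ∈ closure ((⇑) '' convexHull ℝ (range T) : Set (F → F)) :=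
  mem_closure_pi_of_forall_strongDual_tendsto ((convex_convexHull ℝ _).is_linear_image
      ⟨fun _ _ => rfl, fun _ _ => rfl⟩)
    (.of_forall fun ν => mem_image_of_mem _ (subset_convexHull ℝ _ (mem_range_self ν))) h

theorem isVonNBounded_image_apply_convexHull {𝕜 F ι : Type*} [RCLike 𝕜]
    [AddCommGroup F] [Module 𝕜 F] [TopologicalSpace F] [IsTopologicalAddGroup F]
    [ContinuousSMul 𝕜 F] [Module ℝ F] [IsScalarTower ℝ 𝕜 F] [LocallyConvexSpace ℝ F]
    [ContinuousConstSMul ℝ F] {T : ι → F →L[𝕜] F} (x : F)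
    (h : ∀ f : StrongDual 𝕜 F, ∃ C, ∀ ν, ‖f (T ν x)‖ ≤ C) :
    IsVonNBounded 𝕜 ((fun A : F →L[𝕜] F => A x) '' convexHull ℝ (range T)) := by
  refine LocallyConvexSpace.isVonNBounded_of_forall_isBounded_image fun f => ?_
  let L : (F →L[𝕜] F) →ₗ[ℝ] 𝕜 :=
    { toFun := fun A => f (A x)
      map_add' := fun A B => by simp only [add_apply, map_add]
      map_smul' := fun c A => f.map_smul_of_tower c (A x) }
  obtain ⟨C, hC⟩ := h f
  rw [image_image, show (fun A : F →L[𝕜] F => f (A x)) = L from rfl, L.image_convexHull,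
    ← range_comp]
  exact isBounded_convexHull.2 (isBounded_iff_forall_norm_le.2 ⟨C, forall_mem_range.2 hC⟩)

theorem IsFiniteRank.add {𝕜 F : Type} [RCLike 𝕜] [AddCommGroup F] [Module 𝕜 F]
    [TopologicalSpace F] [ContinuousAdd F] {A B : F →L[𝕜] F} (hA : IsFiniteRank 𝕜 A)
    (hB : IsFiniteRank 𝕜 B) : IsFiniteRank 𝕜 (A + B) :=
  have : FiniteDimensional 𝕜 (LinearMap.range (A : F →ₗ[𝕜] F)) := hA
  have : FiniteDimensional 𝕜 (LinearMap.range (B : F →ₗ[𝕜] F)) := hB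
  Submodule.finiteDimensional_of_le (LinearMap.range_add_le (A : F →ₗ[𝕜] F) B)

theorem IsFiniteRank.smul {𝕜 F : Type} [RCLike 𝕜] [AddCommGroup F] [Module 𝕜 F]
    [TopologicalSpace F] [ContinuousConstSMul 𝕜 F] {A : F →L[𝕜] F} (hA : IsFiniteRank 𝕜 A)
    (c : 𝕜) : IsFiniteRank 𝕜 (c • A) :=
  have : FiniteDimensional 𝕜 (LinearMap.range (A : F →ₗ[𝕜] F)) := hA
  Submodule.finiteDimensional_of_le (LinearMap.range_smul_le_range (A : F →ₗ[𝕜] F) c)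

theorem convex_setOf_isFiniteRank {𝕜 F : Type} [RCLike 𝕜] [AddCommGroup F] [Module 𝕜 F]
    [TopologicalSpace F] [ContinuousAdd F] [ContinuousConstSMul 𝕜 F] [Module ℝ F]
    [IsScalarTower ℝ 𝕜 F] [ContinuousConstSMul ℝ F] :
    Convex ℝ {A : F →L[𝕜] F | IsFiniteRank 𝕜 A} := by
  have hcoe (r : ℝ) (A : F →L[𝕜] F) : r • A = (r : 𝕜) • A := by
    ext x
    exact RCLike.real_smul_eq_coe_smul r (A x)
  intro A hA B hB a b _ _ _
  rw [mem_ofPred_eq, hcoe, hcoe]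
  exact (hA.smul a).add (hB.smul b)

/-- A Hausdorff locally convex space `E` possesses the bounded
approximation property if and only if there exists a net of finite-rank operators on
`E` that converges to the identity operator in the strong operator topology (the
topology of pointwise convergence) and is bounded in that topology. -/
theorem statement2 :
    HasBAP 𝕜 E ↔
      ∃ (ι : Type) (lfil : Filter ι) (T : ι → E →L[𝕜] E), lfil.NeBot ∧
        (∀ ν, IsFiniteRank 𝕜 (T ν)) ∧
        (∀ x : E, Filter.Tendsto (fun ν => T ν x) lfil (𝓝 x)) ∧
        (∀ x : E, Bornology.IsVonNBounded 𝕜 (Set.range fun ν => T ν x)) := by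
  have : ContinuousSMul ℝ E := IsScalarTower.continuousSMul 𝕜
  constructor
  · rintro ⟨ι, l, T, hl, hT, hweak, hbdd⟩
    let C := convexHull ℝ (range T)
    let coeC : C → E → E := fun A => ⇑(A : E →L[𝕜] E)
    have hid : (id : E → E) ∈ closure (range coeC) :=
      image_eq_range _ C ▸ coeFn_mem_closure_convexHull_of_tendsto_weak (A := .id 𝕜 E) hweak
    refine ⟨C, comap coeC (𝓝 id), (↑),
      comap_neBot_iff_frequently.2 (mem_closure_iff_frequently.1 hid), fun A => ?_,
      fun x => ((continuous_apply x).tendsto id).comp tendsto_comap,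
      fun x => image_eq_range (fun A : E →L[𝕜] E => A x) C ▸
        isVonNBounded_image_apply_convexHull x (hbdd x)⟩
    exact convexHull_min (t := {A | IsFiniteRank 𝕜 A}) (range_subset_iff.2 hT)
      convex_setOf_isFiniteRank A.2
  · rintro ⟨ι, l, T, hl, hT, hstrong, hbdd⟩
    refine ⟨ι, l, T, hl, hT, fun x f => (f.continuous.tendsto x).comp (hstrong x), fun x f => ?_⟩
    obtain ⟨C, hC⟩ := isBounded_iff_forall_norm_le.1
      ((NormedSpace.isVonNBounded_iff 𝕜).1 ((hbdd x).image f))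
    exact ⟨C, fun ν => hC _ (mem_image_of_mem f (mem_range_self ν))⟩
end

section
/- If the topology of a Hausdorff locally convex space E coincides with the weak topology σ(E, E'), then E possesses the approximation property. -/
/-
Setting: `E` is a Hausdorff locally convex topological vector space over `𝕜 = ℝ` or `ℂ`
(`RCLike 𝕜`), with `E' = E →L[𝕜] 𝕜` its (strong) dual.
-/

open Filter Topology Bornology

/-!
In the weak topology every neighbourhood `U` of `0` contains the common kernel of finitely many
functionals `f₁, …, fₙ`. Composing `p = (f₁, …, fₙ) : E → range p ⊆ 𝕜ⁿ` with a linear right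
inverse gives a finite-rank operator `P` with `fᵢ ∘ P = fᵢ`, so `x - P x ∈ U` for every `x`,
and `P ∘ A` approximates `A` uniformly on all of `E`, not just on precompact sets.
-/

theorem IsFiniteRank.comp {𝕜 : Type} [RCLike 𝕜] {E : Type} [AddCommGroup E] [Module 𝕜 E]
    [TopologicalSpace E] {P : E →L[𝕜] E} (hP : IsFiniteRank 𝕜 P) (A : E →L[𝕜] E) :
    IsFiniteRank 𝕜 (P.comp A) :=
  have : FiniteDimensional 𝕜 (LinearMap.range (P : E →ₗ[𝕜] E)) := hP
  Submodule.finiteDimensional_of_le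
    (LinearMap.range_comp_le_range (A : E →ₗ[𝕜] E) (P : E →ₗ[𝕜] E) :)

theorem exists_isFiniteRank_forall_apply_eq {𝕜 : Type} [RCLike 𝕜] {E : Type} [AddCommGroup E]
    [Module 𝕜 E] [TopologicalSpace E] [IsTopologicalAddGroup E] [ContinuousSMul 𝕜 E]
    {ι : Type} [Finite ι] (f : ι → E →L[𝕜] 𝕜) :
    ∃ P : E →L[𝕜] E, IsFiniteRank 𝕜 P ∧ ∀ i x, f i (P x) = f i x := by
  let p : E →L[𝕜] (ι → 𝕜) := ContinuousLinearMap.pi f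
  obtain ⟨g, hg⟩ := p.rangeRestrict.exists_rightInverse_of_surjective
    (LinearMap.range_rangeRestrict (p : E →ₗ[𝕜] (ι → 𝕜)))
  have hpg (x : E) : p (g (p.rangeRestrict x)) = p x :=
    congrArg Subtype.val congr($hg (p.rangeRestrict x))
  refine ⟨g.comp p.rangeRestrict, ?_, fun i x => congrFun (hpg x) i⟩
  exact Submodule.finiteDimensional_of_le (LinearMap.range_comp_le_range
    (p.rangeRestrict : E →ₗ[𝕜] p.range) (g : p.range →ₗ[𝕜] E) :)

theorem exists_finite_forall_apply_eq_zero_mem_of_eq_induced {𝕜 : Type} [RCLike 𝕜] {E : Type}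
    [AddCommGroup E] [Module 𝕜 E] [t : TopologicalSpace E]
    (h : t = TopologicalSpace.induced (fun (v : E) => fun f : E →L[𝕜] 𝕜 => f v)
      Pi.topologicalSpace)
    {U : Set E} (hU : U ∈ 𝓝 (0 : E)) :
    ∃ s : Set (E →L[𝕜] 𝕜), s.Finite ∧ ∀ v, (∀ f ∈ s, f v = 0) → v ∈ U := by
  rw [h, nhds_induced, nhds_pi] at hU
  obtain ⟨T, hT, hTU⟩ := Filter.mem_comap.mp hU
  obtain ⟨s, hs, V, hV, hVT⟩ := Filter.mem_pi.mp hT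
  refine ⟨s, hs, fun v hv => hTU (hVT fun f hf => ?_)⟩
  simpa [hv f hf] using mem_of_mem_nhds (hV f)

theorem exists_isFiniteRank_forall_sub_mem_of_eq_induced {𝕜 : Type} [RCLike 𝕜] {E : Type}
    [AddCommGroup E] [Module 𝕜 E] [t : TopologicalSpace E] [IsTopologicalAddGroup E]
    [ContinuousSMul 𝕜 E]
    (h : t = TopologicalSpace.induced (fun (v : E) => fun f : E →L[𝕜] 𝕜 => f v)
      Pi.topologicalSpace)
    {U : Set E} (hU : U ∈ 𝓝 (0 : E)) :
    ∃ P : E →L[𝕜] E, IsFiniteRank 𝕜 P ∧ ∀ x, x - P x ∈ U := by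
  obtain ⟨s, hs, hsU⟩ := exists_finite_forall_apply_eq_zero_mem_of_eq_induced h hU
  have := hs.to_subtype
  obtain ⟨P, hP, hPf⟩ := exists_isFiniteRank_forall_apply_eq ((↑) : s → E →L[𝕜] 𝕜)
  exact ⟨P, hP, fun x => hsU _ fun f hf => by simp [hPf ⟨f, hf⟩ x]⟩

variable {𝕜 : Type} [RCLike 𝕜] {E : Type} [AddCommGroup E] [Module 𝕜 E]
  [UniformSpace E] [IsUniformAddGroup E] [ContinuousSMul 𝕜 E]
  [Module ℝ E] [IsScalarTower ℝ 𝕜 E] [LocallyConvexSpace ℝ E] [T2Space E]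

/-- If the topology of a Hausdorff locally convex space `E` coincides with
the weak topology `σ(E, E')`, then `E` possesses the approximation property. -/
theorem statement5
    (h : (inferInstance : TopologicalSpace E) =
      TopologicalSpace.induced (fun (v : E) => fun f : E →L[𝕜] 𝕜 => f v)
        Pi.topologicalSpace) :
    HasAP 𝕜 E := by
  intro A S _ U hU
  obtain ⟨P, hP, hPU⟩ := exists_isFiniteRank_forall_sub_mem_of_eq_induced h hU
  exact ⟨P.comp A, hP.comp A, fun x _ => hPU (A x)⟩
end

section
/- Suppose a Hausdorff locally convex space E possesses a basis of absolutely convex neighborhoods of zero such that for every neighborhood U in this basis the associated Banach space Ê_U possesses the approximation property. Then E possesses the approximation property. -/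
/-
Setting: `E` is a Hausdorff locally convex topological vector space over `𝕜 = ℝ` or `ℂ`
(`RCLike 𝕜`), with `E' = E →L[𝕜] 𝕜` its (strong) dual.
-/

open Filter Topology Bornology

variable {𝕜 : Type} [RCLike 𝕜] {E : Type} [AddCommGroup E] [Module 𝕜 E]
  [UniformSpace E] [IsUniformAddGroup E] [ContinuousSMul 𝕜 E]
  [Module ℝ E] [IsScalarTower ℝ 𝕜 E] [LocallyConvexSpace ℝ E] [T2Space E]

/-
Proof idea: given `A`, a precompact `S` and a neighborhood `U`, pick `W` in the basis with
`A W ⊆ U` and let `π : E → Ê_W` be the canonical map. By the approximation property of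
`Ê_W`, the identity is uniformly close on the precompact set `π S` to a finite-rank operator
`∑ cᵢ ⊗ fᵢ`. Density of `π E` lets us replace each `fᵢ` by some `π eᵢ` at a small cost, and
then `T = ∑ (cᵢ ∘ π) ⊗ eᵢ` is a finite-rank operator on `E` with `p_W (x - T x) < 1`, i.e.
`x - T x ∈ W`, for `x ∈ S`. Hence `A ∘ T` approximates `A` on `S` up to `U`.
-/

section FiniteRank

variable {V F : Type} [AddCommGroup V] [Module 𝕜 V] [TopologicalSpace V]
  [AddCommGroup F] [Module 𝕜 F] [TopologicalSpace F]

theorem IsFiniteRank.comp_left {T : V →L[𝕜] V} (hT : IsFiniteRank 𝕜 T) (A : V →L[𝕜] V) :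
    IsFiniteRank 𝕜 (A.comp T) := by
  have : FiniteDimensional 𝕜 (LinearMap.range (T : V →ₗ[𝕜] V)) := hT
  change FiniteDimensional 𝕜 (LinearMap.range ((A : V →ₗ[𝕜] V).comp (T : V →ₗ[𝕜] V)))
  rw [LinearMap.range_comp]
  exact Module.Finite.map _ _

theorem isFiniteRank_sum_smulRight_s6 [IsTopologicalAddGroup V] [ContinuousSMul 𝕜 V]
    {ι : Type} [Fintype ι] (φ : ι → V →L[𝕜] 𝕜) (e : ι → V) :
    IsFiniteRank 𝕜 (∑ i, (φ i).smulRight (e i)) := by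
  have := FiniteDimensional.span_of_finite 𝕜 (Set.finite_range e)
  refine Submodule.finiteDimensional_of_le (S₂ := Submodule.span 𝕜 (Set.range e)) ?_
  rintro _ ⟨x, rfl⟩
  simp only [FunLike.coe_sum, ContinuousLinearMap.coe_coe, Finset.sum_apply,
    ContinuousLinearMap.smulRight_apply]
  exact Submodule.sum_mem _ fun i _ => Submodule.smul_mem _ _ (Submodule.subset_span ⟨i, rfl⟩)

theorem IsFiniteRank.exists_eq_sum_smulRight [IsTopologicalAddGroup F] [ContinuousSMul 𝕜 F]
    [T2Space F] {G : F →L[𝕜] F} (hG : IsFiniteRank 𝕜 G) :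
    ∃ (n : ℕ) (c : Fin n → F →L[𝕜] 𝕜) (f : Fin n → F), G = ∑ i, (c i).smulRight (f i) := by
  set R := LinearMap.range (G : F →ₗ[𝕜] F)
  have : FiniteDimensional 𝕜 R := hG
  let b := Module.finBasis 𝕜 R
  let g : F →ₗ[𝕜] R := (G : F →ₗ[𝕜] F).rangeRestrict
  have hg : Continuous g := G.continuous.subtype_mk _
  refine ⟨_, fun i => ⟨(b.coord i).comp g, (b.coord i).continuous_of_finiteDimensional.comp hg⟩,
    fun i => b i, ?_⟩
  ext y
  have hy := congrArg Subtype.val (b.sum_repr (g y))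
  simp only [Submodule.coe_sum, Submodule.coe_smul] at hy
  rw [sum_apply]
  exact hy.symm

end FiniteRank

section DenseRange

variable {V F : Type} [AddCommGroup V] [Module 𝕜 V] [NormedAddCommGroup F] [NormedSpace 𝕜 F]

theorem IsFiniteRank.exists_lift_near [TopologicalSpace V] [IsTopologicalAddGroup V]
    [ContinuousSMul 𝕜 V] {π : V →L[𝕜] F} (hπ : DenseRange π) {G : F →L[𝕜] F}
    (hG : IsFiniteRank 𝕜 G) {ε : ℝ} (hε : 0 < ε) :
    ∃ T : V →L[𝕜] V, IsFiniteRank 𝕜 T ∧ ∃ G' : F →L[𝕜] F, ‖G - G'‖ < ε ∧ π.comp T = G'.comp π := by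
  obtain ⟨n, c, f, rfl⟩ := hG.exists_eq_sum_smulRight
  let Φ : (Fin n → F) → F →L[𝕜] F := fun g => ∑ i, (c i).smulRight (g i)
  have hΦ : Continuous Φ := by fun_prop
  obtain ⟨e, he⟩ := (DenseRange.piMap fun _ => hπ).exists_mem_open
    (isOpen_lt (f := fun g => ‖Φ f - Φ g‖) (by fun_prop) continuous_const)
    ⟨f, by simpa [Φ] using hε⟩
  refine ⟨∑ i, ((c i).comp π).smulRight (e i), isFiniteRank_sum_smulRight_s6 _ _, Φ (π ∘ e), he, ?_⟩
  ext x
  simp [Φ]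

theorem HasAP.exists_isFiniteRank_norm_sub_lt_one [UniformSpace V] [IsUniformAddGroup V]
    [ContinuousSMul 𝕜 V] (hF : HasAP 𝕜 F) {π : V →L[𝕜] F} (hπ : DenseRange π) {S : Set V}
    (hS : TotallyBounded S) : ∃ T : V →L[𝕜] V, IsFiniteRank 𝕜 T ∧ ∀ x ∈ S, ‖π (x - T x)‖ < 1 := by
  have hπS : TotallyBounded (π '' S) := hS.image π.uniformContinuous
  obtain ⟨M, hM, hπSM⟩ := hπS.isBounded.exists_pos_norm_le
  obtain ⟨G, hG, hGS⟩ :=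
    hF (ContinuousLinearMap.id 𝕜 F) _ hπS _ (Metric.ball_mem_nhds 0 one_half_pos)
  obtain ⟨T, hT, G', hGG', hlift⟩ := hG.exists_lift_near hπ (by positivity : 0 < 1 / (2 * M))
  refine ⟨T, hT, fun x hx => ?_⟩
  have hx₁ : ‖π x - G (π x)‖ < 1 / 2 := by simpa using hGS _ ⟨x, hx, rfl⟩
  have hx₂ : ‖(G - G') (π x)‖ ≤ 1 / 2 := calc
    ‖(G - G') (π x)‖ ≤ ‖G - G'‖ * ‖π x‖ := (G - G').le_opNorm _
    _ ≤ 1 / (2 * M) * M := by gcongr; exact hπSM _ ⟨x, hx, rfl⟩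
    _ = 1 / 2 := by field_simp
  calc ‖π (x - T x)‖ = ‖(π x - G (π x)) + (G - G') (π x)‖ := by
        rw [map_sub, ← ContinuousLinearMap.comp_apply π T, hlift]; simp
    _ ≤ ‖π x - G (π x)‖ + ‖(G - G') (π x)‖ := norm_add_le _ _
    _ < 1 := by linarith

end DenseRange

section Completion

variable {V : Type} [AddCommGroup V] [Module 𝕜 V]

/-- `V` seminormed by `p`; for `p = gauge U` its completion is the Banach space `Ê_U`. -/
def WithSeminorm (_p : Seminorm 𝕜 V) : Type := V

namespace WithSeminorm

variable (p : Seminorm 𝕜 V)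

instance : SeminormedAddCommGroup (WithSeminorm p) := p.toAddGroupSeminorm.toSeminormedAddCommGroup

instance : Module 𝕜 (WithSeminorm p) := inferInstanceAs (Module 𝕜 V)

instance : NormedSpace 𝕜 (WithSeminorm p) where
  norm_smul_le c x := (map_smul_eq_mul p c (show V from x)).le

noncomputable def toCompletion : V →ₗ[𝕜] UniformSpace.Completion (WithSeminorm p) :=
  (UniformSpace.Completion.toComplL : WithSeminorm p →L[𝕜] _).toLinearMap

theorem norm_toCompletion (v : V) : ‖toCompletion p v‖ = p v :=
  UniformSpace.Completion.norm_coe (E := WithSeminorm p) v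

theorem denseRange_toCompletion : DenseRange (toCompletion p) :=
  UniformSpace.Completion.denseRange_coe (α := WithSeminorm p)

theorem continuous_toCompletion [TopologicalSpace V] [IsTopologicalAddGroup V] (hp : Continuous p) :
    Continuous (toCompletion p) := by
  refine continuous_of_continuousAt_zero (toCompletion p) ?_
  rw [ContinuousAt, map_zero, tendsto_zero_iff_norm_tendsto_zero]
  simpa [norm_toCompletion] using hp.tendsto 0

end WithSeminorm

end Completion

/-- Suppose a Hausdorff locally convex space `E` possesses a basis of
absolutely convex neighborhoods of zero such that for every neighborhood `U` in this
basis, the associated Banach space `Ê_U` (the completion of the quotient of `E` by the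
null space of the gauge `p_U`, normed by `p_U`; characterized up to isometry as a
Banach space `F` with a linear map `π : E → F` of dense range with `‖π x‖ = p_U x`)
possesses the approximation property. Then `E` possesses the approximation property. -/
theorem statement6
    (h : ∃ 𝓑 : Set (Set E),
      (∀ U ∈ 𝓑, U ∈ 𝓝 (0 : E) ∧ Balanced 𝕜 U ∧ Convex ℝ U) ∧
      (∀ V ∈ 𝓝 (0 : E), ∃ U ∈ 𝓑, U ⊆ V) ∧
      (∀ U ∈ 𝓑, ∀ (F : Type) [NormedAddCommGroup F] [NormedSpace 𝕜 F] [CompleteSpace F],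
        ∀ π : E →ₗ[𝕜] F, (∀ v : E, ‖π v‖ = gauge U v) → DenseRange (fun v => π v) →
          HasAP 𝕜 F)) :
    HasAP 𝕜 E := by
  obtain ⟨𝓑, h𝓑, h𝓑_basis, h𝓑_AP⟩ := h
  have : ContinuousSMul ℝ E := IsScalarTower.continuousSMul 𝕜
  intro A S hS U hU
  obtain ⟨W, hW𝓑, hWU⟩ := h𝓑_basis _ (A.continuous.tendsto' 0 0 (map_zero A) hU)
  obtain ⟨hW, hWbal, hWconv⟩ := h𝓑 W hW𝓑
  have hWabs : Absorbent ℝ W := absorbent_nhds_zero hW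
  let p := gaugeSeminorm hWbal hWconv hWabs
  let π : E →L[𝕜] _ := ⟨WithSeminorm.toCompletion p,
    WithSeminorm.continuous_toCompletion p (continuous_gauge hWconv hW)⟩
  have hπ : DenseRange π := WithSeminorm.denseRange_toCompletion p
  have hAP := h𝓑_AP W hW𝓑 _ π.toLinearMap (WithSeminorm.norm_toCompletion p) hπ
  obtain ⟨T, hT, hTS⟩ := hAP.exists_isFiniteRank_norm_sub_lt_one hπ hS
  refine ⟨A.comp T, hT.comp_left A, fun x hx => ?_⟩
  rw [ContinuousLinearMap.comp_apply, ← map_sub]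
  refine hWU (setOfPred_gauge_lt_one_subset_self hWconv (mem_of_mem_nhds hW) hWabs ?_)
  have hx' := hTS x hx
  rw [ContinuousLinearMap.coe_mk', WithSeminorm.norm_toCompletion] at hx'
  exact hx'
end

section
/- Let A be a Fredholm operator on E given by A x = ∑_{i=1}^∞ λ_i ⟨x'_i, x⟩ x_i, where ∑|λ_i| < ∞ and the sequences {x_i} ⊂ E and {x'_i} ⊂ E' are bounded, and let F be a finite-rank operator on E given by F x = ∑_{j=1}^m ⟨y'_j, x⟩ y_j with y_j ∈ E, y'_j ∈ E'. Then the series ∑_{i=1}^∞ λ_i ⟨x'_i, F x_i⟩ converges absolutely and its sum equals ∑_{j=1}^m ⟨y'_j, A y_j⟩, which is the ordinary trace sp(F∘A) of the finite-rank operator F∘A. -/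
/-
Since `{x'_i}` is bounded in `E'`, it is uniformly bounded on the bounded set `F({x_i})`, so
`∑ λ_i ⟨x'_i, F x_i⟩` converges absolutely. Writing `⟨x'_i, F x_i⟩ = ∑_j ⟨y'_j, x_i⟩ ⟨x'_i, y_j⟩`
and applying `y'_j` to the series defining `A y_j` identifies the sum with `∑_j ⟨y'_j, A y_j⟩`.
For the trace, `F ∘ A = u ∘ p` with `p = (y'_j ∘ A)_j : E → 𝕜^m` and `u c = ∑_j c_j y_j`;
the trace on the range of `u ∘ p` equals that of `p ∘ u` on `𝕜^m`, whose diagonal is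
`(⟨y'_j, A y_j⟩)_j`.
-/

/-
Setting: `E` is a Hausdorff locally convex topological vector space over `𝕜 = ℝ` or `ℂ`
(`RCLike 𝕜`), with `E' = E →L[𝕜] 𝕜` its (strong) dual.
-/

open Filter Topology Bornology

variable {𝕜 : Type} [RCLike 𝕜] {E : Type} [AddCommGroup E] [Module 𝕜 E]
  [UniformSpace E] [IsUniformAddGroup E] [ContinuousSMul 𝕜 E]
  [Module ℝ E] [IsScalarTower ℝ 𝕜 E] [LocallyConvexSpace ℝ E] [T2Space E]

namespace LinearMap

variable {K M N : Type*} [Field K] [AddCommGroup M] [Module K M] [AddCommGroup N] [Module K N]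

theorem trace_restrict_range_eq_of_range_le (f : M →ₗ[K] M) (p : Submodule K M)
    [FiniteDimensional K p] (hp : range f ≤ p) :
    trace K (range f) (f.restrict fun x _ ↦ mem_range_self f x) =
      trace K p (f.restrict fun x _ ↦ hp (mem_range_self f x)) := by
  have : FiniteDimensional K (range f) := Submodule.finiteDimensional_of_le hp
  let r : p →ₗ[K] range f := f.rangeRestrict ∘ₗ p.subtype
  have hrange : f.restrict (fun x _ ↦ mem_range_self f x) = r ∘ₗ Submodule.inclusion hp := rfl
  have hsub : f.restrict (fun x _ ↦ hp (mem_range_self f x)) = Submodule.inclusion hp ∘ₗ r := rfl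
  rw [hrange, hsub, trace_comp_comm']

theorem trace_restrict_range_comp [FiniteDimensional K N] (u : N →ₗ[K] M) (p : M →ₗ[K] N) :
    trace K (range (u ∘ₗ p)) ((u ∘ₗ p).restrict fun x _ ↦ mem_range_self _ x) =
      trace K N (p ∘ₗ u) := by
  rw [trace_restrict_range_eq_of_range_le _ (range u) (range_comp_le_range p u)]
  have hsplit : (u ∘ₗ p).restrict (fun x _ ↦ range_comp_le_range p u (mem_range_self _ x)) =
      u.rangeRestrict ∘ₗ (p ∘ₗ (range u).subtype) := rfl
  rw [hsplit, trace_comp_comm']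
  rfl

theorem trace_restrict_range_of_eq_sum_smul {ι : Type*} [Fintype ι] (f : M →ₗ[K] M)
    (φ : ι → M →ₗ[K] K) (y : ι → M) (hf : ∀ v, f v = ∑ j, φ j v • y j) :
    trace K (range f) (f.restrict fun x _ ↦ mem_range_self f x) = ∑ j, φ j (y j) := by
  classical
  obtain rfl : f = Fintype.linearCombination K y ∘ₗ pi φ :=
    LinearMap.ext fun v ↦ by simp [hf, Fintype.linearCombination_apply]
  rw [trace_restrict_range_comp, trace_eq_matrix_trace K (Pi.basisFun K ι), Matrix.trace]
  simp [Fintype.linearCombination_apply_single]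

end LinearMap

section FredholmSeries

variable {K V : Type*} [NontriviallyNormedField K] [AddCommGroup V] [Module K V]
  [TopologicalSpace V]

theorem Bornology.IsVonNBounded.exists_norm_apply_le {S : Set (V →L[K] K)} {s : Set V}
    (hS : IsVonNBounded K S) (hs : IsVonNBounded K s) :
    ∃ C, ∀ f ∈ S, ∀ v ∈ s, ‖f v‖ ≤ C := by
  obtain ⟨C, hC⟩ := (NormedSpace.isVonNBounded_iff K).1
    (ContinuousLinearMap.isVonNBounded_image2_apply hS hs) |>.exists_norm_le
  exact ⟨C, fun f hf v hv ↦ hC _ (Set.mem_image2_of_mem hf hv)⟩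

variable {l : ℕ → K} {x : ℕ → V} {x' : ℕ → V →L[K] K}

theorem summable_norm_mul_apply_of_isVonNBounded (hl : Summable fun i ↦ ‖l i‖)
    (hx' : IsVonNBounded K (Set.range x')) {s : Set V} (hs : IsVonNBounded K s)
    {v : ℕ → V} (hv : ∀ i, v i ∈ s) :
    Summable fun i ↦ ‖l i * x' i (v i)‖ := by
  obtain ⟨C, hC⟩ := hx'.exists_norm_apply_le hs
  refine (hl.mul_right C).of_nonneg_of_le (fun i ↦ norm_nonneg _) fun i ↦ ?_
  rw [norm_mul]
  exact mul_le_mul_of_nonneg_left (hC _ (Set.mem_range_self i) _ (hv i)) (norm_nonneg _)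

theorem hasSum_mul_apply_mul_apply [CompleteSpace K] [ContinuousSMul K V]
    (hl : Summable fun i ↦ ‖l i‖) (hx : IsVonNBounded K (Set.range x))
    (hx' : IsVonNBounded K (Set.range x')) {v w : V}
    (hw : Tendsto (fun n ↦ ∑ i ∈ Finset.range n, (l i * x' i v) • x i) atTop (𝓝 w))
    (φ : V →L[K] K) :
    HasSum (fun i ↦ l i * x' i v * φ (x i)) (φ w) := by
  -- `x'_i v * φ (x_i) = x'_i (φ (x_i) • v)`, and `{φ (x_i) • v}` is bounded
  have hsum : Summable fun i ↦ ‖l i * x' i v * φ (x i)‖ := by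
    refine (summable_norm_mul_apply_of_isVonNBounded hl hx' (hx.image (φ.smulRight v))
      fun i ↦ ⟨x i, Set.mem_range_self i, rfl⟩).congr fun i ↦ ?_
    simp only [ContinuousLinearMap.smulRight_apply, map_smul, smul_eq_mul]
    ring_nf
  refine (hasSum_iff_tendsto_nat_of_summable_norm hsum).2 ?_
  simpa [Function.comp_def, map_sum, map_smul] using (φ.continuous.tendsto w).comp hw

theorem hasSum_mul_apply_of_eq_sum_smul [CompleteSpace K] [ContinuousSMul K V]
    (hl : Summable fun i ↦ ‖l i‖) (hx : IsVonNBounded K (Set.range x))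
    (hx' : IsVonNBounded K (Set.range x')) {A : V → V}
    (hA : ∀ v, Tendsto (fun n ↦ ∑ i ∈ Finset.range n, (l i * x' i v) • x i) atTop (𝓝 (A v)))
    {ι : Type*} [Fintype ι] {F : V → V} {y : ι → V} {y' : ι → V →L[K] K}
    (hF : ∀ v, F v = ∑ j, y' j v • y j) :
    HasSum (fun i ↦ l i * x' i (F (x i))) (∑ j, y' j (A (y j))) := by
  convert hasSum_sum fun j _ ↦ hasSum_mul_apply_mul_apply hl hx hx' (hA (y j)) (y' j) with i
  simp [hF, Finset.mul_sum, mul_comm, mul_left_comm]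

end FredholmSeries

/-- Let `A` be a Fredholm operator on `E` given by
`A x = ∑_{i=1}^∞ λ_i ⟨x'_i, x⟩ x_i`, where `∑ |λ_i| < ∞` and the sequences
`{x_i} ⊆ E`, `{x'_i} ⊆ E'` are bounded, and let `F` be the finite-rank operator
`F x = ∑_{j=1}^m ⟨y'_j, x⟩ y_j`. Then the series `∑_{i=1}^∞ λ_i ⟨x'_i, F x_i⟩`
converges absolutely and its sum equals `∑_{j=1}^m ⟨y'_j, A y_j⟩`, which is the
ordinary trace `sp (F ∘ A)` of the finite-rank operator `F ∘ A`. -/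
theorem statement7
    (l : ℕ → 𝕜) (hl : Summable fun i => ‖l i‖)
    (x : ℕ → E) (x' : ℕ → E →L[𝕜] 𝕜)
    (hx : Bornology.IsVonNBounded 𝕜 (Set.range x))
    (hx' : Bornology.IsVonNBounded 𝕜 (Set.range x'))
    (A : E → E)
    (hA : ∀ v : E, Filter.Tendsto (fun n => ∑ i ∈ Finset.range n, (l i * x' i v) • x i)
      Filter.atTop (𝓝 (A v)))
    (m : ℕ) (y : Fin m → E) (y' : Fin m → E →L[𝕜] 𝕜)
    (F : E →L[𝕜] E) (hF : ∀ v : E, F v = ∑ j, (y' j v) • y j) :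
    (Summable fun i => ‖l i * x' i (F (x i))‖) ∧
    (∑' i, l i * x' i (F (x i)) = ∑ j, y' j (A (y j))) ∧
    (∀ G : E →L[𝕜] E, (∀ v : E, G v = F (A v)) → sp 𝕜 G = ∑ j, y' j (A (y j))) := by
  refine ⟨summable_norm_mul_apply_of_isVonNBounded hl hx' (hx.image F)
      (fun i ↦ ⟨x i, Set.mem_range_self i, rfl⟩),
    (hasSum_mul_apply_of_eq_sum_smul hl hx hx' hA hF).tsum_eq, fun G hG ↦ ?_⟩
  let Alin : E →ₗ[𝕜] E := linearMapOfTendsto A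
    (fun n ↦ ∑ i ∈ Finset.range n, (l i • (x' i : E →ₗ[𝕜] 𝕜)).smulRight (x i))
    (tendsto_pi_nhds.2 fun v ↦ by simpa using hA v)
  exact LinearMap.trace_restrict_range_of_eq_sum_smul (G : E →ₗ[𝕜] E)
    (fun j ↦ (y' j : E →ₗ[𝕜] 𝕜) ∘ₗ Alin) y fun v ↦ by simp [hG, hF, Alin]
end

section
/- Suppose the space E possesses the weak approximation property. Then every nuclear operator on E has a well-defined trace: if ∑_{i=1}^∞ λ_i ⟨x'_i, x⟩ x_i = ∑_{j=1}^∞ μ_j ⟨y'_j, x⟩ y_j for all x ∈ E, where both are nuclear representations, then ∑_{i=1}^∞ λ_i ⟨x'_i, x_i⟩ = ∑_{j=1}^∞ μ_j ⟨y'_j, y_j⟩. Moreover, if {B_ν} is a net of continuous operators converging to B ∈ L(E) uniformly on all absolutely convex compact subsets of E, then tr(A∘B_ν) → tr(A∘B) for every nuclear operator A on E. -/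
/-
Setting: `E` is a Hausdorff locally convex topological vector space over `𝕜 = ℝ` or `ℂ`
(`RCLike 𝕜`), with `E' = E →L[𝕜] 𝕜` its (strong) dual.
-/

open Filter Topology Bornology

/-!
For a nuclear representation `(λ, x, x')` of `A`, the number `τ T = ∑ λᵢ ⟨x'ᵢ, T xᵢ⟩` is linear
in `T`, and on a rank-one operator `f(·) z` it equals `f (A z)`; so on finite-rank operators it
depends only on `A`. Choosing `βᵢ → 0` with `∑ |λᵢ| / βᵢ < ∞`, the points `βᵢ xᵢ` form a null
sequence in the Banach disk, whose closed absolutely convex hull `K` is compact, and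
`|λᵢ ⟨x'ᵢ, G xᵢ⟩| ≤ (|λᵢ| / βᵢ) |⟨x'ᵢ, G (βᵢ xᵢ)⟩|` together with the equicontinuity of `{x'ᵢ}`
makes `τ` continuous for uniform convergence on `K`. This is the second claim; with the density
of finite-rank operators it also gives the first, since two representations of `A` give functionals
that agree on finite-rank operators.
-/

open Set Pointwise

lemma exists_tendsto_zero_summable_div {a : ℕ → ℝ} (ha₀ : ∀ i, 0 ≤ a i) (ha : Summable a) :
    ∃ β : ℕ → ℝ, (∀ i, 0 < β i ∧ β i ≤ 1) ∧ Tendsto β atTop (𝓝 0) ∧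
      Summable fun i => a i / β i := by
  -- `s i ^ 2` is the tail `∑_{k ≥ i} a k`, padded by `2⁻¹ ^ i` to keep it positive
  set s : ℕ → ℝ := fun i => √(∑' k, a (k + i) + 2⁻¹ ^ i) with hs
  have htail : ∀ i, ∑' k, a (k + i) = a i + ∑' k, a (k + (i + 1)) := fun i => by
    rw [((summable_nat_add_iff i).2 ha).tsum_eq_zero_add]
    simp only [zero_add, add_right_comm _ 1 i, add_assoc]
  have hs_pos : ∀ i, 0 < s i := fun i =>
    Real.sqrt_pos.2 (add_pos_of_nonneg_of_pos (tsum_nonneg fun k => ha₀ _) (by positivity))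
  have ht_nonneg : ∀ i, 0 ≤ ∑' k, a (k + i) + 2⁻¹ ^ i := fun i =>
    add_nonneg (tsum_nonneg fun k => ha₀ _) (by positivity)
  have hs_sq : ∀ i, s i ^ 2 - s (i + 1) ^ 2 = a i + 2⁻¹ ^ (i + 1) := fun i => by
    rw [hs, Real.sq_sqrt (ht_nonneg i), Real.sq_sqrt (ht_nonneg (i + 1)), htail i, pow_succ]
    ring
  have hs_anti : ∀ i, s (i + 1) ≤ s i := fun i => by
    nlinarith [hs_sq i, hs_pos i, hs_pos (i + 1), ha₀ i,
      pow_pos (by norm_num : (0 : ℝ) < 2⁻¹) (i + 1)]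
  have hs_lim : Tendsto s atTop (𝓝 0) := by
    have := ((tendsto_sum_nat_add a).add
      (tendsto_pow_atTop_nhds_zero_of_lt_one (by norm_num : (0 : ℝ) ≤ 2⁻¹) (by norm_num))).sqrt
    simpa [hs] using this
  have hdiff : Summable fun i => s i - s (i + 1) := by
    refine summable_of_sum_range_le (c := s 0) (fun i => sub_nonneg.2 (hs_anti i)) fun n => ?_
    rw [Finset.sum_range_sub']
    linarith [hs_pos n]
  refine ⟨fun i => min 1 (s i + s (i + 1)),
    fun i => ⟨lt_min one_pos (by linarith [hs_pos i, hs_pos (i + 1)]), min_le_left _ _⟩, ?_, ?_⟩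
  · simpa using (tendsto_const_nhds (x := (1 : ℝ))).min
      (hs_lim.add (hs_lim.comp (tendsto_add_atTop_nat 1)))
  · refine Summable.of_nonneg_of_le (fun i => div_nonneg (ha₀ i) (by positivity)) (fun i => ?_)
      (ha.add hdiff)
    have hpos : 0 < s i + s (i + 1) := by linarith [hs_pos i, hs_pos (i + 1)]
    -- `a i ≤ s i ^ 2 - s (i + 1) ^ 2`, so dividing by `s i + s (i + 1)` leaves a telescoping term
    have hquot : a i / (s i + s (i + 1)) ≤ s i - s (i + 1) := by
      rw [div_le_iff₀ hpos]
      nlinarith [hs_sq i, pow_pos (by norm_num : (0 : ℝ) < 2⁻¹) (i + 1)]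
    rcases min_choice 1 (s i + s (i + 1)) with h | h <;> simp only [h]
    · linarith [hs_anti i, div_one (a i)]
    · linarith [ha₀ i]

theorem balancedHull_eq_closedBall_smul {𝕜 E : Type*} [NormedField 𝕜] [AddCommGroup E]
    [Module 𝕜 E] (s : Set E) : balancedHull 𝕜 s = Metric.closedBall (0 : 𝕜) 1 • s := by
  ext x
  simp [mem_balancedHull_iff, Set.mem_smul, Set.mem_smul_set]

theorem Balanced.convexHull_real {𝕜 E : Type*} [RCLike 𝕜] [AddCommGroup E] [Module 𝕜 E]
    [Module ℝ E] [IsScalarTower ℝ 𝕜 E] {s : Set E} (hs : Balanced 𝕜 s) :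
    Balanced 𝕜 (convexHull ℝ s) := by
  rw [balanced_iff_smul_mem] at hs ⊢
  intro a ha x hx
  suffices Convex ℝ {y | a • y ∈ convexHull ℝ s} from
    convexHull_min (fun y hy => show a • y ∈ _ from subset_convexHull ℝ s (hs ha hy)) this hx
  intro y hy z hz u v hu hv huv
  show a • (u • y + v • z) ∈ convexHull ℝ s
  rw [smul_add, smul_comm a u, smul_comm a v]
  exact convex_convexHull ℝ s hy hz hu hv huv

theorem IsComplete.isCompact_closure_of_subset {α : Type*} [UniformSpace α] [T0Space α]
    {s t : Set α} (ht : IsComplete t) (hs : TotallyBounded s) (hst : s ⊆ t) :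
    IsCompact (closure s) := by
  refine isCompact_iff_totallyBounded_isComplete.2 ⟨hs.closure, fun f hf hfs => ?_⟩
  have hclt : closure s ⊆ t := closure_minimal hst ht.isClosed
  obtain ⟨x, -, hx⟩ := ht f hf (hfs.trans (principal_mono.2 hclt))
  have := hf.1
  exact ⟨x, isClosed_closure.mem_of_tendsto hx (le_principal_iff.1 hfs), hx⟩

section CompactHull

variable {𝕜 : Type*} [RCLike 𝕜] {E : Type*} [AddCommGroup E] [Module 𝕜 E]
  [UniformSpace E] [IsUniformAddGroup E] [ContinuousSMul 𝕜 E]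
  [Module ℝ E] [IsScalarTower ℝ 𝕜 E] [LocallyConvexSpace ℝ E] [T2Space E]

theorem exists_isCompact_balanced_convex_of_tendsto_zero {B : Set E} (hBb : Balanced 𝕜 B)
    (hBc : Convex ℝ B) (hB : IsComplete B) {z : ℕ → E} (hzB : ∀ i, z i ∈ B)
    (hz : Tendsto z atTop (𝓝 0)) :
    ∃ K : Set E, IsCompact K ∧ Balanced 𝕜 K ∧ Convex ℝ K ∧ ∀ i, z i ∈ K := by
  have := IsScalarTower.continuousSMul (M := ℝ) 𝕜 (α := E)
  have hS : IsCompact (balancedHull 𝕜 (insert 0 (range z))) := by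
    rw [balancedHull_eq_closedBall_smul]
    exact (isCompact_closedBall _ _).smul_set hz.isCompact_insert_range
  have hSB : balancedHull 𝕜 (insert 0 (range z)) ⊆ B := hBb.balancedHull_subset_of_subset <|
    insert_subset_iff.2 ⟨hBb.zero_mem ⟨_, hzB 0⟩, range_subset_iff.2 hzB⟩
  refine ⟨_, hB.isCompact_closure_of_subset (totallyBounded_convexHull.2 hS.totallyBounded)
      (convexHull_min hSB hBc),
    (balancedHull.balanced _).convexHull_real.closure, (convex_convexHull ℝ _).closure,
    fun i => subset_closure (subset_convexHull ℝ _ ?_)⟩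
  exact subset_balancedHull 𝕜 (mem_insert_of_mem _ (mem_range_self i))

end CompactHull

section Equicontinuous

variable {𝕜 : Type} [RCLike 𝕜] {E : Type} [AddCommGroup E] [Module 𝕜 E] [TopologicalSpace E]

theorem norm_le_of_mem_smul_set {g : E →L[𝕜] 𝕜} {U : Set E} (hg : ∀ v ∈ U, ‖g v‖ ≤ 1)
    {c : 𝕜} {w : E} (hw : w ∈ c • U) : ‖g w‖ ≤ ‖c‖ := by
  obtain ⟨u, hu, rfl⟩ := hw
  rw [map_smul, smul_eq_mul, norm_mul]
  exact mul_le_of_le_one_right (norm_nonneg c) (hg u hu)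

theorem exists_forall_norm_le_of_isVonNBounded {ι : Type*} {g : ι → E →L[𝕜] 𝕜} {U : Set E}
    (hU : U ∈ 𝓝 0) (hg : ∀ i, ∀ v ∈ U, ‖g i v‖ ≤ 1) {S : Set E} (hS : IsVonNBounded 𝕜 S) :
    ∃ C, ∀ i, ∀ w ∈ S, ‖g i w‖ ≤ C := by
  obtain ⟨c, hc⟩ := (hS hU).exists
  exact ⟨‖c‖, fun i w hw => norm_le_of_mem_smul_set (hg i) (hc hw)⟩

end Equicontinuous

section FiniteRank

variable {𝕜 : Type} [RCLike 𝕜] {E : Type} [AddCommGroup E] [Module 𝕜 E] [TopologicalSpace E]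
  [IsTopologicalAddGroup E] [ContinuousSMul 𝕜 E] [T2Space E]

theorem IsFiniteRank.exists_eq_sum_smulRight_s10 {F : E →L[𝕜] E} (hF : IsFiniteRank 𝕜 F) :
    ∃ (n : ℕ) (f : Fin n → E →L[𝕜] 𝕜) (z : Fin n → E), F = ∑ k, (f k).smulRight (z k) := by
  have : FiniteDimensional 𝕜 (LinearMap.range (F : E →ₗ[𝕜] E)) := hF
  let b := Module.finBasis 𝕜 (LinearMap.range (F : E →ₗ[𝕜] E))
  let G := F.codRestrict _ (fun v => LinearMap.mem_range_self (F : E →ₗ[𝕜] E) v)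
  refine ⟨_, fun k => LinearMap.toContinuousLinearMap (b.coord k) ∘L G, fun k => b k, ?_⟩
  ext v
  have hv := congrArg Subtype.val (b.sum_repr (G v))
  rw [Submodule.coe_sum] at hv
  simp only [FunLike.coe_sum, Finset.sum_apply, ContinuousLinearMap.smulRight_apply]
  exact hv.symm

end FiniteRank

section Trace

variable {𝕜 : Type} [RCLike 𝕜] {E : Type} [AddCommGroup E] [Module 𝕜 E] [Module ℝ E]
  [UniformSpace E] [IsUniformAddGroup E]
  {A : E → E} {l : ℕ → 𝕜} {x : ℕ → E} {x' : ℕ → E →L[𝕜] 𝕜}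

/-- `∑ λᵢ ⟨x'ᵢ, T xᵢ⟩`: for a nuclear representation `(l, x, x')` of `A`, the trace of `A ∘ T`. -/
noncomputable def traceComp (l : ℕ → 𝕜) (x : ℕ → E) (x' : ℕ → E →L[𝕜] 𝕜) (T : E →L[𝕜] E) : 𝕜 :=
  ∑' i, l i * x' i (T (x i))

theorem NuclearRep.summable_traceComp (h : NuclearRep 𝕜 A l x x') (T : E →L[𝕜] E) :
    Summable fun i => l i * x' i (T (x i)) := by
  obtain ⟨hl, ⟨B, -, -, hB, -, hxB⟩, ⟨U, hU, hx'U⟩, -⟩ := h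
  obtain ⟨C, hC⟩ := exists_forall_norm_le_of_isVonNBounded hU hx'U (hB.image T)
  refine Summable.of_norm_bounded (hl.mul_right C) fun i => ?_
  rw [norm_mul]
  exact mul_le_mul_of_nonneg_left (hC i _ (mem_image_of_mem T (hxB i))) (norm_nonneg _)

theorem NuclearRep.traceComp_sub (h : NuclearRep 𝕜 A l x x') (S T : E →L[𝕜] E) :
    traceComp l x x' (S - T) = traceComp l x x' S - traceComp l x x' T := by
  simp only [traceComp, sub_apply, map_sub, mul_sub]
  exact (h.summable_traceComp S).tsum_sub (h.summable_traceComp T)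

theorem NuclearRep.traceComp_sum (h : NuclearRep 𝕜 A l x x') {κ : Type*} (s : Finset κ)
    (T : κ → E →L[𝕜] E) : traceComp l x x' (∑ k ∈ s, T k) = ∑ k ∈ s, traceComp l x x' (T k) := by
  simp only [traceComp, sum_apply, map_sum, Finset.mul_sum]
  exact Summable.tsum_finsetSum fun k _ => h.summable_traceComp (T k)

variable [ContinuousSMul 𝕜 E]

theorem NuclearRep.traceComp_smulRight (h : NuclearRep 𝕜 A l x x') (f : E →L[𝕜] 𝕜) (z : E) :
    traceComp l x x' (f.smulRight z) = f (A z) := by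
  have hfA := (f.continuous.tendsto _).comp (h.2.2.2 z)
  have hsum : ∀ n, f (∑ i ∈ Finset.range n, (l i * x' i z) • x i)
      = ∑ i ∈ Finset.range n, l i * x' i (f.smulRight z (x i)) := fun n => by
    simp only [map_sum, map_smul, smul_eq_mul, ContinuousLinearMap.smulRight_apply]
    exact Finset.sum_congr rfl fun i _ => by ring
  simp only [Function.comp_def, hsum] at hfA
  exact tendsto_nhds_unique (h.summable_traceComp _).hasSum.tendsto_sum_nat hfA

variable [T2Space E] {μ : ℕ → 𝕜} {y : ℕ → E} {y' : ℕ → E →L[𝕜] 𝕜}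

theorem NuclearRep.traceComp_eq_of_isFiniteRank (h₁ : NuclearRep 𝕜 A l x x')
    (h₂ : NuclearRep 𝕜 A μ y y') {F : E →L[𝕜] E} (hF : IsFiniteRank 𝕜 F) :
    traceComp l x x' F = traceComp μ y y' F := by
  obtain ⟨n, f, z, rfl⟩ := hF.exists_eq_sum_smulRight_s10
  simp only [h₁.traceComp_sum, h₂.traceComp_sum, h₁.traceComp_smulRight, h₂.traceComp_smulRight]

end Trace

variable {𝕜 : Type} [RCLike 𝕜] {E : Type} [AddCommGroup E] [Module 𝕜 E]
  [UniformSpace E] [IsUniformAddGroup E] [ContinuousSMul 𝕜 E]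
  [Module ℝ E] [IsScalarTower ℝ 𝕜 E] [LocallyConvexSpace ℝ E] [T2Space E]

section Continuity

variable {A : E → E} {l : ℕ → 𝕜} {x : ℕ → E} {x' : ℕ → E →L[𝕜] 𝕜}

theorem NuclearRep.exists_isCompact_norm_traceComp_le (h : NuclearRep 𝕜 A l x x') :
    ∃ K : Set E, IsCompact K ∧ Balanced 𝕜 K ∧ Convex ℝ K ∧ (0 : E) ∈ K ∧
      ∃ U ∈ 𝓝 (0 : E), ∃ C : ℝ, ∀ (G : E →L[𝕜] E) (c : 𝕜),
        MapsTo G K (c • U) → ‖traceComp l x x' G‖ ≤ ‖c‖ * C := by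
  obtain ⟨hl, ⟨B, hBb, hBc, hB, hBcompl, hxB⟩, ⟨U, hU, hx'U⟩, -⟩ := h
  obtain ⟨β, hβ, hβ0, hβsum⟩ := exists_tendsto_zero_summable_div (fun i => norm_nonneg (l i)) hl
  have hβnorm : ∀ i, ‖(β i : 𝕜)‖ = β i := fun i => by simp [(hβ i).1.le]
  have hzB : ∀ i, (β i : 𝕜) • x i ∈ B := fun i =>
    hBb.smul_mem (by rw [hβnorm]; exact (hβ i).2) (hxB i)
  have hz : Tendsto (fun i => (β i : 𝕜) • x i) atTop (𝓝 0) :=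
    hB.smul_tendsto_zero (.of_forall hxB) (by
      rw [← RCLike.ofReal_zero]; exact (RCLike.continuous_ofReal.tendsto 0).comp hβ0)
  obtain ⟨K, hK, hKb, hKc, hzK⟩ :=
    exists_isCompact_balanced_convex_of_tendsto_zero hBb hBc hBcompl hzB hz
  refine ⟨K, hK, hKb, hKc, hKb.zero_mem ⟨_, hzK 0⟩, U, hU, ∑' i, ‖l i‖ / β i,
    fun G c hG => tsum_of_norm_bounded (hβsum.hasSum.mul_left ‖c‖) fun i => ?_⟩
  have hi : β i * ‖x' i (G (x i))‖ ≤ ‖c‖ := by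
    have := norm_le_of_mem_smul_set (hx'U i) (hG (hzK i))
    rwa [map_smul, map_smul, smul_eq_mul, norm_mul, hβnorm] at this
  rw [norm_mul, mul_div_assoc', mul_comm ‖c‖, mul_div_assoc]
  exact mul_le_mul_of_nonneg_left ((le_div_iff₀' (hβ i).1).2 hi) (norm_nonneg _)

theorem NuclearRep.exists_isCompact_forall_norm_traceComp_le (h : NuclearRep 𝕜 A l x x') :
    ∃ K : Set E, IsCompact K ∧ Balanced 𝕜 K ∧ Convex ℝ K ∧ (0 : E) ∈ K ∧
      ∀ ε > 0, ∃ V ∈ 𝓝 (0 : E), ∀ G : E →L[𝕜] E, MapsTo G K V → ‖traceComp l x x' G‖ ≤ ε := by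
  obtain ⟨K, hK, hKb, hKc, h0K, U, hU, C, hC⟩ := h.exists_isCompact_norm_traceComp_le
  refine ⟨K, hK, hKb, hKc, h0K, fun ε hε => ?_⟩
  have hδ : 0 < ε / (|C| + 1) := by positivity
  refine ⟨((ε / (|C| + 1) : ℝ) : 𝕜) • U,
    (set_smul_mem_nhds_zero_iff (RCLike.ofReal_ne_zero.2 hδ.ne')).2 hU,
    fun G hG => (hC G _ hG).trans ?_⟩
  rw [RCLike.norm_ofReal, abs_of_pos hδ, div_mul_eq_mul_div, div_le_iff₀ (by positivity)]
  nlinarith [le_abs_self C]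

theorem NuclearRep.tendsto_traceComp (h : NuclearRep 𝕜 A l x x') {ι : Type*} {L : Filter ι}
    {T : ι → E →L[𝕜] E} {S : E →L[𝕜] E}
    (hT : ∀ K : Set E, IsCompact K → Balanced 𝕜 K → Convex ℝ K →
      ∀ U ∈ 𝓝 (0 : E), ∀ᶠ ν in L, ∀ z ∈ K, T ν z - S z ∈ U) :
    Tendsto (fun ν => traceComp l x x' (T ν)) L (𝓝 (traceComp l x x' S)) := by
  obtain ⟨K, hK, hKb, hKc, -, hest⟩ := h.exists_isCompact_forall_norm_traceComp_le
  refine Metric.tendsto_nhds.2 fun ε hε => ?_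
  obtain ⟨V, hV, hGV⟩ := hest (ε / 2) (half_pos hε)
  filter_upwards [hT K hK hKb hKc V hV] with ν hν
  rw [dist_eq_norm, ← h.traceComp_sub]
  exact (hGV (T ν - S) hν).trans_lt (half_lt_self hε)

theorem HasWeakAP.traceComp_eq (hE : HasWeakAP 𝕜 E) {μ : ℕ → 𝕜} {y : ℕ → E}
    {y' : ℕ → E →L[𝕜] 𝕜} (h₁ : NuclearRep 𝕜 A l x x') (h₂ : NuclearRep 𝕜 A μ y y')
    (T : E →L[𝕜] E) : traceComp l x x' T = traceComp μ y y' T := by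
  obtain ⟨K₁, hK₁, hK₁b, hK₁c, h0K₁, hest₁⟩ := h₁.exists_isCompact_forall_norm_traceComp_le
  obtain ⟨K₂, hK₂, hK₂b, hK₂c, h0K₂, hest₂⟩ := h₂.exists_isCompact_forall_norm_traceComp_le
  refine eq_of_forall_dist_le fun ε hε => ?_
  obtain ⟨V₁, hV₁, hG₁⟩ := hest₁ (ε / 2) (half_pos hε)
  obtain ⟨V₂, hV₂, hG₂⟩ := hest₂ (ε / 2) (half_pos hε)
  obtain ⟨F, hF, hTF⟩ := hE T (K₁ + K₂) (hK₁.add hK₂) (hK₁b.add hK₂b) (hK₁c.add hK₂c)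
    (V₁ ∩ V₂) (inter_mem hV₁ hV₂)
  have hmaps : MapsTo (T - F) (K₁ + K₂) (V₁ ∩ V₂) := hTF
  calc dist (traceComp l x x' T) (traceComp μ y y' T)
      = ‖traceComp l x x' (T - F) - traceComp μ y y' (T - F)‖ := by
        rw [dist_eq_norm, h₁.traceComp_sub, h₂.traceComp_sub,
          h₁.traceComp_eq_of_isFiniteRank h₂ hF, sub_sub_sub_cancel_right]
    _ ≤ ε / 2 + ε / 2 := (norm_sub_le _ _).trans <| add_le_add
        (hG₁ _ ((hmaps.mono_left (subset_add_left K₁ h0K₂)).mono_right inter_subset_left))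
        (hG₂ _ ((hmaps.mono_left (subset_add_right K₂ h0K₁)).mono_right inter_subset_right))
    _ = ε := add_halves ε

end Continuity

/-- Suppose `E` possesses the weak approximation property. Then every
nuclear operator on `E` has a well-defined trace: any two nuclear representations of
the same operator give the same value `∑_{i=1}^∞ λ_i ⟨x'_i, x_i⟩`. Moreover, if a net
`{B_ν}` of continuous operators converges to `B ∈ L(E)` uniformly on all absolutely
convex compact subsets of `E`, then `tr (A ∘ B_ν) → tr (A ∘ B)` for every nuclear
operator `A` (where `tr (A ∘ C) = ∑_{i=1}^∞ λ_i ⟨x'_i, C x_i⟩`). -/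
theorem statement10 (hwap : HasWeakAP 𝕜 E) :
    (∀ (A : E → E) (l : ℕ → 𝕜) (x : ℕ → E) (x' : ℕ → E →L[𝕜] 𝕜)
        (μ : ℕ → 𝕜) (y : ℕ → E) (y' : ℕ → E →L[𝕜] 𝕜),
      NuclearRep 𝕜 A l x x' → NuclearRep 𝕜 A μ y y' →
      ∑' i, l i * x' i (x i) = ∑' j, μ j * y' j (y j)) ∧
    (∀ (A : E → E) (l : ℕ → 𝕜) (x : ℕ → E) (x' : ℕ → E →L[𝕜] 𝕜),
      NuclearRep 𝕜 A l x x' →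
      ∀ (ι : Type) (lfil : Filter ι), lfil.NeBot →
      ∀ (Bν : ι → E →L[𝕜] E) (B : E →L[𝕜] E),
        (∀ K : Set E, IsCompact K → Balanced 𝕜 K → Convex ℝ K →
          ∀ U ∈ 𝓝 (0 : E), ∀ᶠ ν in lfil, ∀ z ∈ K, Bν ν z - B z ∈ U) →
        Filter.Tendsto (fun ν => ∑' i, l i * x' i (Bν ν (x i))) lfil
          (𝓝 (∑' i, l i * x' i (B (x i))))) :=
  ⟨fun _ _ _ _ _ _ _ h₁ h₂ => hwap.traceComp_eq h₁ h₂ (ContinuousLinearMap.id 𝕜 E),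
    fun _ _ _ _ h _ _ _ _ _ hB => h.tendsto_traceComp hB⟩
end

section
/- If a net {A_ν} of weakly continuous linear operators on E converges in the weak operator topology to an operator A and is bounded in that topology, then it converges to A in the ultra-weak topology, i.e., ∑_{i=1}^∞ λ_i ⟨x'_i, A_ν x_i⟩ → ∑_{i=1}^∞ λ_i ⟨x'_i, A x_i⟩ for every summable sequence {λ_i} and all sequences {x_i} ⊂ B ⊂ E, {x'_i} ⊂ B' ⊂ E' contained in absolutely convex bounded sets B, B' for which E_B and E'_{B'} are complete. -/
/-
Setting: `E` is a Hausdorff locally convex topological vector space over `𝕜 = ℝ` or `ℂ`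
(`RCLike 𝕜`), with `E' = E →L[𝕜] 𝕜` its (strong) dual.
-/

open Filter Topology Bornology

/-!
The ultra-weak pairing is the series `∑ λ_i ⟨x'_i, A_ν x_i⟩`, so by dominated convergence for
series it suffices to bound `|⟨y', A_ν x⟩|` uniformly in `ν`, `x ∈ B` and `y' ∈ B'`. This takes
two applications of the uniform boundedness principle in the Banach spaces `E'_{B'}` and `E_B`
(the span of a Banach disk, normed by its gauge): first to the functionals `y' ↦ ⟨y', A_ν w⟩`
on `E'_{B'}`, indexed by `ν`, which gives pointwise boundedness of the functionals
`x ↦ ⟨y', A_ν x⟩` on `E_B`, indexed by `ν` and `y' ∈ B'`; then to these.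
-/

open Set
open scoped Pointwise

theorem LinearMap.norm_apply_le_of_forall_mem_ball {𝕜 E : Type} [RCLike 𝕜]
    [SeminormedAddCommGroup E] [NormedSpace 𝕜 E] (f : E →ₗ[𝕜] 𝕜) {c : ℝ}
    (h : ∀ z ∈ Metric.ball (0 : E) 1, ‖f z‖ ≤ c) (z : E) : ‖f z‖ ≤ c * ‖z‖ := by
  have hlim : Tendsto (fun t => c * t) (𝓝[>] ‖z‖) (𝓝 (c * ‖z‖)) :=
    ((continuous_const_mul c).tendsto _).mono_left nhdsWithin_le_nhds
  refine ge_of_tendsto hlim (eventually_nhdsWithin_of_forall fun t (ht : ‖z‖ < t) => ?_)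
  have ht0 : 0 < t := (norm_nonneg z).trans_lt ht
  have hz : ((t⁻¹ : ℝ) : 𝕜) • z ∈ Metric.ball (0 : E) 1 := by
    rw [mem_ball_zero_iff, norm_smul, RCLike.norm_ofReal, abs_inv, abs_of_pos ht0,
      inv_mul_lt_one₀ ht0]
    exact ht
  have := h _ hz
  rw [map_smul, smul_eq_mul, norm_mul, RCLike.norm_ofReal, abs_inv, abs_of_pos ht0,
    inv_mul_le_iff₀ ht0] at this
  exact this.trans_eq (mul_comm t c)

theorem Bornology.IsVonNBounded.exists_norm_le {𝕜 V : Type} [RCLike 𝕜] [AddCommGroup V]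
    [Module 𝕜 V] [TopologicalSpace V] {B : Set V} (hB : IsVonNBounded 𝕜 B) (f : V →L[𝕜] 𝕜) :
    ∃ c, ∀ x ∈ B, ‖f x‖ ≤ c := by
  obtain ⟨c, hc⟩ :=
    isBounded_iff_forall_norm_le.1 ((NormedSpace.isVonNBounded_iff 𝕜).1 (hB.image f))
  exact ⟨c, fun x hx => hc _ (mem_image_of_mem f hx)⟩

section BanachDisk

variable {𝕜 : Type} [RCLike 𝕜] {V : Type} [AddCommGroup V] [Module 𝕜 V] [Module ℝ V]
  [IsScalarTower ℝ 𝕜 V] {B : Set V}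

theorem exists_pos_mem_smul_of_mem_span (hbal : Balanced 𝕜 B) (hconv : Convex ℝ B)
    (h0 : (0 : V) ∈ B) {x : V} (hx : x ∈ Submodule.span 𝕜 B) :
    ∃ r : ℝ, 0 < r ∧ x ∈ r • B := by
  induction hx using Submodule.span_induction with
  | mem x hx => exact ⟨1, one_pos, by simpa using hx⟩
  | zero => exact ⟨1, one_pos, by simpa using h0⟩
  | add x y _ _ hx hy =>
    obtain ⟨r, hr, hxr⟩ := hx
    obtain ⟨s, hs, hys⟩ := hy
    refine ⟨r + s, add_pos hr hs, ?_⟩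
    rw [hconv.add_smul hr.le hs.le]
    exact add_mem_add hxr hys
  | smul a x _ hx =>
    obtain ⟨r, hr, b, hb, rfl⟩ := hx
    have ha : ‖a‖ ≤ ‖‖a‖ + 1‖ := by rw [Real.norm_of_nonneg (by positivity)]; linarith
    obtain ⟨b', hb', hab⟩ := hbal.smul_mono ha (smul_mem_smul_set hb)
    refine ⟨r * (‖a‖ + 1), by positivity, b', hb', ?_⟩
    change (r * (‖a‖ + 1)) • b' = a • r • b
    rw [mul_smul, show (‖a‖ + 1) • b' = a • b from hab, smul_comm]

theorem absorbs_singleton_of_mem_span (hbal : Balanced 𝕜 B) (hconv : Convex ℝ B)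
    (h0 : (0 : V) ∈ B) {x : V} (hx : x ∈ Submodule.span 𝕜 B) : Absorbs ℝ B {x} := by
  obtain ⟨r, hr, b, hb, rfl⟩ := exists_pos_mem_smul_of_mem_span hbal hconv h0 hx
  refine absorbs_iff_norm.2 ⟨r, fun c hc => singleton_subset_iff.2 ?_⟩
  have hrc : ‖(r : 𝕜)‖ ≤ ‖c‖ := by simpa [abs_of_pos hr] using hc
  obtain ⟨b', hb', hab⟩ := hbal.smul_mono hrc (smul_mem_smul_set hb)
  exact ⟨b', hb', hab.trans (RCLike.real_smul_eq_coe_smul r b).symm⟩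

theorem absorbent_preimage_span (hbal : Balanced 𝕜 B) (hconv : Convex ℝ B)
    (h0 : (0 : V) ∈ B) : Absorbent ℝ (((↑) : Submodule.span 𝕜 B → V) ⁻¹' B) := fun x => by
  simpa only [absorbs_iff_eventually_cobounded_mapsTo, mapsTo_singleton, mem_preimage,
    Submodule.coe_smul_of_tower] using absorbs_singleton_of_mem_span hbal hconv h0 x.2

theorem Convex.preimage_span (hconv : Convex ℝ B) :
    Convex ℝ (((↑) : Submodule.span 𝕜 B → V) ⁻¹' B) :=
  hconv.linear_preimage ((Submodule.span 𝕜 B).subtype.restrictScalars ℝ)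

noncomputable def spanGaugeSeminorm (hbal : Balanced 𝕜 B) (hconv : Convex ℝ B)
    (h0 : (0 : V) ∈ B) : Seminorm 𝕜 (Submodule.span 𝕜 B) :=
  gaugeSeminorm (hbal.mulActionHom_preimage (Submodule.span 𝕜 B).subtype.toMulActionHom)
    hconv.preimage_span (absorbent_preimage_span hbal hconv h0)

theorem spanGaugeSeminorm_apply (hbal : Balanced 𝕜 B) (hconv : Convex ℝ B) (h0 : (0 : V) ∈ B)
    (x : Submodule.span 𝕜 B) : spanGaugeSeminorm hbal hconv h0 x = gauge B x := by
  show gauge _ x = _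
  rw [gauge_def', gauge_def']
  rfl

theorem mem_of_spanGaugeSeminorm_lt_one (hbal : Balanced 𝕜 B) (hconv : Convex ℝ B)
    (h0 : (0 : V) ∈ B) {x : Submodule.span 𝕜 B}
    (hx : spanGaugeSeminorm hbal hconv h0 x < 1) : (x : V) ∈ B :=
  setOfPred_gauge_lt_one_subset_self (s := ((↑) : Submodule.span 𝕜 B → V) ⁻¹' B)
    hconv.preimage_span h0 (absorbent_preimage_span hbal hconv h0) hx

theorem exists_bound_of_pointwise_bound_of_gauge_complete (hbal : Balanced 𝕜 B)
    (hconv : Convex ℝ B)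
    (hcomplete : ∀ u : ℕ → V, (∀ n, u n ∈ Submodule.span 𝕜 B) →
      (∀ ε : ℝ, 0 < ε → ∃ N : ℕ, ∀ m ≥ N, ∀ n ≥ N, gauge B (u m - u n) < ε) →
      ∃ v ∈ Submodule.span 𝕜 B, ∀ ε : ℝ, 0 < ε → ∃ N : ℕ, ∀ n ≥ N, gauge B (v - u n) < ε)
    {J : Type} (f : J → V →ₗ[𝕜] 𝕜) (hfB : ∀ j, ∃ c, ∀ x ∈ B, ‖f j x‖ ≤ c)
    (hpt : ∀ v ∈ Submodule.span 𝕜 B, ∃ C, ∀ j, ‖f j v‖ ≤ C) :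
    ∃ M, ∀ j, ∀ x ∈ B, ‖f j x‖ ≤ M := by
  rcases B.eq_empty_or_nonempty with rfl | hne
  · exact ⟨0, by simp⟩
  have h0 := hbal.zero_mem hne
  -- `E_B`, normed by the gauge of `B`: Banach–Steinhaus does not need the gauge to separate points.
  let p := spanGaugeSeminorm hbal hconv h0
  let _ := AddGroupSeminorm.toSeminormedAddCommGroup p.toAddGroupSeminorm
  let _ : NormedSpace 𝕜 (Submodule.span 𝕜 B) := ⟨fun c x => (map_smul_eq_mul p c x).le⟩
  have hnorm (x : Submodule.span 𝕜 B) : ‖x‖ = gauge B x :=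
    spanGaugeSeminorm_apply hbal hconv h0 x
  have : CompleteSpace (Submodule.span 𝕜 B) := by
    refine Metric.complete_of_cauchySeq_tendsto fun u hu => ?_
    obtain ⟨v, hv, hlim⟩ := hcomplete (fun n => u n) (fun n => (u n).2) fun ε hε => by
      simpa only [dist_eq_norm, hnorm, Submodule.coe_sub] using Metric.cauchySeq_iff.1 hu ε hε
    refine ⟨⟨v, hv⟩, Metric.tendsto_atTop.2 fun ε hε => ?_⟩
    simpa only [dist_comm _ (⟨v, hv⟩ : Submodule.span 𝕜 B), dist_eq_norm, hnorm,
      Submodule.coe_sub] using hlim ε hε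
  let φ (j : J) : Submodule.span 𝕜 B →ₗ[𝕜] 𝕜 := f j ∘ₗ (Submodule.span 𝕜 B).subtype
  have hbound (j : J) : ∃ C, ∀ z, ‖φ j z‖ ≤ C * ‖z‖ := by
    obtain ⟨c, hc⟩ := hfB j
    exact ⟨c, (φ j).norm_apply_le_of_forall_mem_ball
      fun z hz => hc z (mem_of_spanGaugeSeminorm_lt_one hbal hconv h0 (mem_ball_zero_iff.1 hz))⟩
  let g (j : J) : Submodule.span 𝕜 B →L[𝕜] 𝕜 :=
    LinearMap.mkContinuousOfExistsBound _ (hbound j)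
  obtain ⟨M, hM⟩ := banach_steinhaus (g := g) fun z => hpt z z.2
  refine ⟨M, fun j x hx => ?_⟩
  calc ‖f j x‖ = ‖g j ⟨x, Submodule.subset_span hx⟩‖ := rfl
    _ ≤ ‖g j‖ * 1 := (g j).le_opNorm_of_le ((hnorm _).trans_le (gauge_le_one_of_mem hx))
    _ ≤ M := (mul_one _).trans_le (hM j)

theorem IsBanachDisk.exists_bound_of_pointwise_bound [TopologicalSpace V]
    (hB : IsBanachDisk 𝕜 B) {J : Type} (f : J → V →L[𝕜] 𝕜)
    (hpt : ∀ v ∈ Submodule.span 𝕜 B, ∃ C, ∀ j, ‖f j v‖ ≤ C) :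
    ∃ M, ∀ j, ∀ x ∈ B, ‖f j x‖ ≤ M :=
  exists_bound_of_pointwise_bound_of_gauge_complete hB.1 hB.2.1 hB.2.2.2 (fun j => f j)
    (fun j => hB.2.2.1.exists_norm_le (f j)) hpt

end BanachDisk

section WeakOperatorBounded

variable {𝕜 : Type} [RCLike 𝕜] {E : Type} [AddCommGroup E] [Module 𝕜 E] [Module ℝ E]
  [IsScalarTower ℝ 𝕜 E] [TopologicalSpace E] [ContinuousSMul 𝕜 E]

theorem exists_bound_of_weakOperator_bounded {ι : Type} (T : ι → E →ₗ[𝕜] E)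
    (hT : ∀ ν, IsWeaklyContinuous 𝕜 (T ν))
    (hbdd : ∀ (v : E) (f : E →L[𝕜] 𝕜), ∃ C : ℝ, ∀ ν, ‖f (T ν v)‖ ≤ C)
    {B : Set E} {B' : Set (E →L[𝕜] 𝕜)} (hB : IsBanachDisk 𝕜 B) (hB' : IsBanachDisk 𝕜 B') :
    ∃ M, ∀ ν, ∀ x ∈ B, ∀ y' ∈ B', ‖y' (T ν x)‖ ≤ M := by
  have hpt (w : E) : ∃ C, ∀ ν, ∀ y' ∈ B', ‖y' (T ν w)‖ ≤ C :=
    hB'.exists_bound_of_pointwise_bound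
      (fun ν => { toFun := fun y' => y' (T ν w), map_add' := fun _ _ => rfl,
                  map_smul' := fun _ _ => rfl, cont := continuous_eval_const (T ν w) })
      fun y' _ => hbdd w y'
  obtain ⟨M, hM⟩ := hB.exists_bound_of_pointwise_bound
    (fun p : ι × B' => ⟨(p.2 : E →ₗ[𝕜] 𝕜) ∘ₗ T p.1, hT p.1 p.2⟩)
    fun v _ => (hpt v).imp fun _ hC p => hC p.1 p.2 p.2.2
  exact ⟨M, fun ν x hx y' hy' => hM (ν, ⟨y', hy'⟩) x hx⟩

end WeakOperatorBounded

variable {𝕜 : Type} [RCLike 𝕜] {E : Type} [AddCommGroup E] [Module 𝕜 E]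
  [UniformSpace E] [IsUniformAddGroup E] [ContinuousSMul 𝕜 E]
  [Module ℝ E] [IsScalarTower ℝ 𝕜 E] [LocallyConvexSpace ℝ E] [T2Space E]

theorem statement15_general
    (ι : Type) (lfil : Filter ι)
    (Aν : ι → E →ₗ[𝕜] E) (hAν : ∀ ν, IsWeaklyContinuous 𝕜 (Aν ν))
    (A : E →ₗ[𝕜] E)
    (hconv : ∀ (v : E) (f : E →L[𝕜] 𝕜),
      Filter.Tendsto (fun ν => f (Aν ν v)) lfil (𝓝 (f (A v))))
    (hbdd : ∀ (v : E) (f : E →L[𝕜] 𝕜), ∃ C : ℝ, ∀ ν, ‖f (Aν ν v)‖ ≤ C) :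
    ∀ (l : ℕ → 𝕜) (x : ℕ → E) (x' : ℕ → E →L[𝕜] 𝕜),
      FredholmKernelSeqs 𝕜 l x x' →
      Filter.Tendsto (fun ν => ∑' i, l i * x' i (Aν ν (x i))) lfil
        (𝓝 (∑' i, l i * x' i (A (x i)))) := by
  rintro l x x' ⟨hl, ⟨B, hB, hxB⟩, ⟨B', hB', hx'B⟩⟩
  obtain ⟨M, hM⟩ := exists_bound_of_weakOperator_bounded Aν hAν hbdd hB hB'
  refine tendsto_tsum_of_dominated_convergence (hl.mul_right M)
    (fun i => (hconv (x i) (x' i)).const_mul (l i)) (Eventually.of_forall fun ν i => ?_)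
  rw [norm_mul]
  exact mul_le_mul_of_nonneg_left (hM ν (x i) (hxB i) (x' i) (hx'B i)) (norm_nonneg _)

/-- If a net `{A_ν}` of weakly continuous linear operators on `E`
converges in the weak operator topology to an operator `A` and is bounded in that
topology, then it converges to `A` in the ultra-weak topology: for every summable
`{λ_i}` and all sequences `{x_i} ⊆ B ⊆ E`, `{x'_i} ⊆ B' ⊆ E'` contained in absolutely
convex bounded sets `B`, `B'` for which `E_B` and `E'_{B'}` are complete, one has
`∑_{i=1}^∞ λ_i ⟨x'_i, A_ν x_i⟩ → ∑_{i=1}^∞ λ_i ⟨x'_i, A x_i⟩`. -/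
theorem statement15
    (ι : Type) (lfil : Filter ι) (hne : lfil.NeBot)
    (Aν : ι → E →ₗ[𝕜] E) (hAν : ∀ ν, IsWeaklyContinuous 𝕜 (Aν ν))
    (A : E →ₗ[𝕜] E)
    (hconv : ∀ (v : E) (f : E →L[𝕜] 𝕜),
      Filter.Tendsto (fun ν => f (Aν ν v)) lfil (𝓝 (f (A v))))
    (hbdd : ∀ (v : E) (f : E →L[𝕜] 𝕜), ∃ C : ℝ, ∀ ν, ‖f (Aν ν v)‖ ≤ C) :
    ∀ (l : ℕ → 𝕜) (x : ℕ → E) (x' : ℕ → E →L[𝕜] 𝕜),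
      FredholmKernelSeqs 𝕜 l x x' →
      Filter.Tendsto (fun ν => ∑' i, l i * x' i (Aν ν (x i))) lfil
        (𝓝 (∑' i, l i * x' i (A (x i)))) :=
  statement15_general ι lfil Aν hAν A hconv hbdd
end
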